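/- Let Δ, d, k be positive integers with (d+1)k ≥ Δ + 1, and let G be a graph with maximum degree at most Δ. Suppose that G has no equitable d-degenerate k-colouring but has a near-equitable d-degenerate k-colouring φ. Then the last subdigraph D_- of the decomposition of the accessible classes of φ contains at least two colour classes, i.e. |V(D_-)| ≥ 2. -/

import Mathlib

open Finset

attribute [local instance] Classical.propDecidable

variable {V : Type*} [Fintype V] [DecidableEq V]

/-- The subgraph of `G` induced on the vertex set `S` is `d`-degenerate: every nonempty
subset of `S` contains a vertex having at most `d` neighbours inside that subset. -/
def DegenOn (G : SimpleGraph V) (d : ℕ) (S : Finset V) : Prop :=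
  ∀ s : Finset V, s ⊆ S → s.Nonempty → ∃ v ∈ s, (s.filter (fun u => G.Adj v u)).card ≤ d

/-- The colour class of colour `i` under the colouring `f`. -/
def cls {k : ℕ} (f : V → Fin k) (i : Fin k) : Finset V :=
  Finset.univ.filter (fun v => f v = i)

/-- `f` is a `d`-degenerate `k`-colouring of `G`: each colour class induces a
`d`-degenerate subgraph. -/
def IsDegenColoring (G : SimpleGraph V) (d : ℕ) {k : ℕ} (f : V → Fin k) : Prop :=
  ∀ i, DegenOn G d (cls f i)

/-- `f` is an equitable colouring: any two colour classes differ in size by at most one. -/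
def IsEquitable {k : ℕ} (f : V → Fin k) : Prop :=
  ∀ i j, (cls f i).card ≤ (cls f j).card + 1

/-- `f` is a near-equitable `k`-colouring of an `n`-vertex graph (conditions (E1),(E2)):
with the colour classes sorted by size, `⌊n/k⌋ − 1 ≤ |C_1| ≤ ⌊n/k⌋ ≤ |C_2| ≤ … ≤
|C_{k−1}| ≤ ⌈n/k⌉ ≤ |C_k| ≤ ⌈n/k⌉ + 1`, and `2 ≤ |C_k| − |C_1| ≤ 3`.  Stated label-free:
all class sizes lie in `[⌊n/k⌋ − 1, ⌈n/k⌉ + 1]`, at most one class is smaller than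
`⌊n/k⌋`, at most one class is larger than `⌈n/k⌉`, some class has size `≤ ⌊n/k⌋`, some
class has size `≥ ⌈n/k⌉`, and the largest class exceeds the smallest by at least `2` and
at most `3`.  (Here `⌈n/k⌉ = (n + k - 1) / k` in natural division.) -/
def NearEquitable (n : ℕ) {k : ℕ} (f : V → Fin k) : Prop :=
  (∀ i, n / k - 1 ≤ (cls f i).card ∧ (cls f i).card ≤ (n + k - 1) / k + 1) ∧
  (Finset.univ.filter (fun i => (cls f i).card < n / k)).card ≤ 1 ∧
  (Finset.univ.filter (fun i => (n + k - 1) / k < (cls f i).card)).card ≤ 1 ∧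
  (∃ i, (cls f i).card ≤ n / k) ∧
  (∃ i, (n + k - 1) / k ≤ (cls f i).card) ∧
  (∃ i j, (cls f i).card + 2 ≤ (cls f j).card) ∧
  (∀ i j, (cls f j).card ≤ (cls f i).card + 3)

/-- The vertex `v` is movable to the colour class of colour `j`: `v` has a different
colour, and adding `v` to that class keeps it `d`-degenerate. -/
def Movable (G : SimpleGraph V) (d : ℕ) {k : ℕ} (f : V → Fin k) (v : V) (j : Fin k) :
    Prop :=
  f v ≠ j ∧ DegenOn G d (insert v (cls f j))

/-- Arc of the auxiliary digraph `D`: there is an arc from colour `i` to colour `j`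
(`i ≠ j`) iff some vertex of class `i` is movable to class `j`. -/
def MvArc (G : SimpleGraph V) (d : ℕ) {k : ℕ} (f : V → Fin k) (i j : Fin k) : Prop :=
  i ≠ j ∧ ∃ v, f v = i ∧ Movable G d f v j

/-- Class `i` is accessible to class `j`: `D` has a (possibly trivial) directed path from
`i` to `j`. -/
def AccTo (G : SimpleGraph V) (d : ℕ) {k : ℕ} (f : V → Fin k) : Fin k → Fin k → Prop :=
  Relation.ReflTransGen (MvArc G d f)

/-- Accessibility within the subdigraph of `D` induced on the set `S` of colours. -/
def AccToWithin (G : SimpleGraph V) (d : ℕ) {k : ℕ} (f : V → Fin k)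
    (S : Finset (Fin k)) : Fin k → Fin k → Prop :=
  Relation.ReflTransGen (fun i j => i ∈ S ∧ j ∈ S ∧ MvArc G d f i j)

/-- Class `i` has minimum size among all colour classes. -/
def IsMinClass {k : ℕ} (f : V → Fin k) (i : Fin k) : Prop :=
  ∀ j, (cls f i).card ≤ (cls f j).card

/-- Class `i` is accessible: it is accessible to some colour class of minimum size. -/
def Accessible (G : SimpleGraph V) (d : ℕ) {k : ℕ} (f : V → Fin k) (i : Fin k) : Prop :=
  ∃ j, IsMinClass f j ∧ AccTo G d f i j

/-- `𝒜`: the set of accessible colours. -/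
noncomputable def Aset (G : SimpleGraph V) (d : ℕ) {k : ℕ} (f : V → Fin k) :
    Finset (Fin k) :=
  Finset.univ.filter (fun i => Accessible G d f i)

/-- `ℬ`: the set of non-accessible colours. -/
noncomputable def Bset (G : SimpleGraph V) (d : ℕ) {k : ℕ} (f : V → Fin k) :
    Finset (Fin k) :=
  Finset.univ.filter (fun i => ¬ Accessible G d f i)

/-- `A`: the union of the accessible colour classes. -/
noncomputable def Averts (G : SimpleGraph V) (d : ℕ) {k : ℕ} (f : V → Fin k) : Finset V :=
  Finset.univ.filter (fun v => Accessible G d f (f v))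

/-- `B`: the union of the non-accessible colour classes. -/
noncomputable def Bverts (G : SimpleGraph V) (d : ℕ) {k : ℕ} (f : V → Fin k) : Finset V :=
  Finset.univ.filter (fun v => ¬ Accessible G d f (f v))

/-- The colours used by the subdigraphs `D_1, …, D_{i-1}` preceding `D_i`. -/
def UsedBefore {k q : ℕ} (𝒟 : Fin q → Finset (Fin k)) (i : Fin q) : Finset (Fin k) :=
  (Finset.univ.filter (fun i' => i' < i)).biUnion 𝒟

/-- `(𝒟, trm)` is the decomposition `D_1, …, D_q` of `𝒜` with terminals
`trm 1, …, trm q`: at each step `i`, `trm i` is the smallest-index minimum-size colour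
class not yet used (here "smallest index" is the smallest colour, the classes being
labelled in non-decreasing order of size), `D_i` consists of the unused accessible classes
accessible to `trm i`, the process exhausts all minimum-size classes, and every accessible
class belongs to some `D_i`. -/
def IsDecomp (G : SimpleGraph V) (d : ℕ) {k : ℕ} (f : V → Fin k) {q : ℕ}
    (𝒟 : Fin q → Finset (Fin k)) (trm : Fin q → Fin k) : Prop :=
  (∀ i : Fin q,
      IsMinClass f (trm i) ∧
      trm i ∉ UsedBefore 𝒟 i ∧
      (∀ j, IsMinClass f j → j ∉ UsedBefore 𝒟 i → trm i ≤ j) ∧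
      (∀ u, u ∈ 𝒟 i ↔
        Accessible G d f u ∧ u ∉ UsedBefore 𝒟 i ∧ AccTo G d f u (trm i))) ∧
  (∀ j, IsMinClass f j → ∃ i, j ∈ 𝒟 i) ∧
  (∀ u, Accessible G d f u → ∃ i, u ∈ 𝒟 i)

/-- `𝒯` for the choice `U` of removed class: the classes of `D_- − U` (here `Dl` is the
vertex set of `D_-` and `Cm` its terminal `C_-`) that are non-accessible to `C_-` in
`D_- − U`. -/
noncomputable def TSet (G : SimpleGraph V) (d : ℕ) {k : ℕ} (f : V → Fin k)
    (Dl : Finset (Fin k)) (Cm U : Fin k) : Finset (Fin k) :=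
  (Dl.erase U).filter (fun W => ¬ AccToWithin G d f (Dl.erase U) W Cm)

/-- `U` is a valid choice of `U_-`: it belongs to `D_-` and minimises the number of
classes of `D_- − U` that are non-accessible to `C_-` there. -/
def IsUminus (G : SimpleGraph V) (d : ℕ) {k : ℕ} (f : V → Fin k)
    (Dl : Finset (Fin k)) (Cm U : Fin k) : Prop :=
  U ∈ Dl ∧ ∀ U' ∈ Dl, (TSet G d f Dl Cm U).card ≤ (TSet G d f Dl Cm U').card

/-- `e` is a degeneracy ordering of the induced subgraph `G[S]` for the parameter `d`. -/
def IsDegOrdOn (G : SimpleGraph V) (d : ℕ) (S : Finset V)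
    (e : Fin S.card ≃ {x // x ∈ S}) : Prop :=
  ∀ i, (Finset.univ.filter (fun j => j < i ∧ G.Adj (e i : V) (e j : V))).card ≤ d

/-- The parameter `p` of a degeneracy ordering of `G[S]`: the largest (1-based) index
whose vertex has exactly `d` earlier neighbours (`0` if none). -/
noncomputable def ordPOn (G : SimpleGraph V) (d : ℕ) (S : Finset V)
    (e : Fin S.card ≃ {x // x ∈ S}) : ℕ :=
  (Finset.univ.filter (fun i =>
    (Finset.univ.filter (fun j => j < i ∧ G.Adj (e i : V) (e j : V))).card = d)).sup
      (fun i => (i : ℕ) + 1)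

/-- `p(G[S])`: the minimum of `ordPOn` over all degeneracy orderings of `G[S]`. -/
noncomputable def pMinOn (G : SimpleGraph V) (d : ℕ) (S : Finset V) : ℕ :=
  sInf {p | ∃ e : Fin S.card ≃ {x // x ∈ S}, IsDegOrdOn G d S e ∧ ordPOn G d S e = p}

/-- `V*` of the ordering `e` of `G[S]`: the set of its first `ordPOn G d S e` vertices. -/
noncomputable def VstarOf (G : SimpleGraph V) (d : ℕ) (S : Finset V)
    (e : Fin S.card ≃ {x // x ∈ S}) : Finset V :=
  (Finset.univ.filter (fun i : Fin S.card => (i : ℕ) < ordPOn G d S e)).image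
    (fun i => (e i : V))

/-- The size of the largest colour class, `|C_k|`. -/
def maxS {k : ℕ} (f : V → Fin k) : ℕ := Finset.univ.sup (fun i => (cls f i).card)

/-- The size of the smallest colour class, `|C_1|`. -/
noncomputable def minS {k : ℕ} (f : V → Fin k) : ℕ := sInf {m | ∃ i, (cls f i).card = m}

/-- `Σ_{V ∈ 𝒯} |V*| = Σ_{V ∈ 𝒯} p(G[V])`. -/
noncomputable def sumT (G : SimpleGraph V) (d : ℕ) {k : ℕ} (f : V → Fin k)
    (𝒯 : Finset (Fin k)) : ℕ :=
  ∑ i ∈ 𝒯, pMinOn G d (cls f i)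

/-- Lexicographic comparison of triples of naturals. -/
def Lex3Le (x y : ℕ × ℕ × ℕ) : Prop :=
  x.1 < y.1 ∨ (x.1 = y.1 ∧ (x.2.1 < y.2.1 ∨ (x.2.1 = y.2.1 ∧ x.2.2 ≤ y.2.2)))

/-- The triple `(|C_k| − |C_1|, b, Σ_{V ∈ 𝒯} |V*|)` associated with a colouring `f` and a
choice `𝒯` of the set of classes `𝒯`. -/
noncomputable def tripleOf (G : SimpleGraph V) (d : ℕ) {k : ℕ} (f : V → Fin k)
    (𝒯 : Finset (Fin k)) : ℕ × ℕ × ℕ :=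
  (maxS f - minS f, (Bset G d f).card, sumT G d f 𝒯)

/-- The near-equitable `d`-degenerate colouring `f` (with its associated set `𝒯f`) is
minimal: its triple `(|C_k| − |C_1|, b, Σ_{V ∈ 𝒯} |V*|)` is lexicographically smallest
among all near-equitable `d`-degenerate `k`-colourings of `G` with their associated
choices of decomposition and `U_-`. -/
def MinimalNE (G : SimpleGraph V) (d : ℕ) {k : ℕ} (f : V → Fin k)
    (𝒯f : Finset (Fin k)) : Prop :=
  ∀ g : V → Fin k, IsDegenColoring G d g → NearEquitable (Fintype.card V) g →
    ∀ (q : ℕ) (hq : 0 < q) (𝒟 : Fin q → Finset (Fin k)) (trm : Fin q → Fin k),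
      IsDecomp G d g 𝒟 trm →
      ∀ U : Fin k,
        IsUminus G d g (𝒟 ⟨q - 1, by omega⟩) (trm ⟨q - 1, by omega⟩) U →
        Lex3Le (tripleOf G d f 𝒯f)
          (tripleOf G d g (TSet G d g (𝒟 ⟨q - 1, by omega⟩) (trm ⟨q - 1, by omega⟩) U))

/-- `G[S]` has an equitable `d`-degenerate `m`-colouring. -/
def HasEqDegenColOn (G : SimpleGraph V) (d : ℕ) (S : Finset V) (m : ℕ) : Prop :=
  ∃ g : V → Fin m,
    (∀ i, DegenOn G d (S.filter (fun v => g v = i))) ∧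
    (∀ i j, (S.filter (fun v => g v = i)).card ≤ (S.filter (fun v => g v = j)).card + 1)

/-! If `D_-` were the single class `T = C_-`, no vertex of `T` could move to another accessible
class (that would put `T` into an earlier `D_i`), and no vertex of a non-accessible class could
move to `T`. So every vertex of the set `U` of vertices with at least `d` neighbours in `T` has at
least `d + 1` neighbours in each of the other `a - 1` accessible classes, and every non-accessible
vertex has at least `d + 1` neighbours in `U`. Double counting the edges between `U` and the `b`
non-accessible classes with `Δ + 1 ≤ (d + 1)(a + b)` shows that these classes contain at most
`|T| b` vertices in total, while each of them is strictly larger than the minimum-size class `T`;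
hence `b = 0`. But a near-equitable colouring whose classes are all accessible becomes equitable
by moving one vertex along each arc of a simple path from a largest class to a smallest one. -/

section Degeneracy

omit [Fintype V]

variable {G : SimpleGraph V} {d : ℕ}

omit [DecidableEq V] in
lemma DegenOn.mono {S S' : Finset V} (h : DegenOn G d S) (hsub : S' ⊆ S) : DegenOn G d S' :=
  fun s hs hne => h s (hs.trans hsub) hne

-- `s` is a subset of `insert v S` of minimum degree `> d`, with `v` removed.
lemma DegenOn.exists_core_of_not_insert {S : Finset V} {v : V} (hS : DegenOn G d S)
    (h : ¬ DegenOn G d (insert v S)) :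
    ∃ s ⊆ S, d < (s.filter (fun u => G.Adj v u)).card ∧
      ∀ w ∈ s, d ≤ (s.filter (fun u => G.Adj w u)).card := by
  simp only [DegenOn, not_forall, not_exists, not_and, not_le] at h
  obtain ⟨s, hsub, hne, hdense⟩ := h
  have hv : v ∈ s := by
    by_contra hv
    obtain ⟨w, hw, hwd⟩ := hS s (fun u hu => (Finset.mem_insert.mp (hsub hu)).resolve_left
      (ne_of_mem_of_not_mem hu hv)) hne
    exact (hdense w hw).not_ge hwd
  refine ⟨s.erase v, fun u hu => ?_, ?_, fun w hw => ?_⟩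
  · exact (Finset.mem_insert.mp (hsub (Finset.mem_of_mem_erase hu))).resolve_left
      (Finset.ne_of_mem_erase hu)
  · rw [Finset.filter_erase, Finset.erase_eq_of_notMem (by simp)]
    exact hdense v hv
  · rw [Finset.filter_erase]
    have := hdense w (Finset.mem_of_mem_erase hw)
    have := Finset.pred_card_le_card_erase (s := s.filter (fun u => G.Adj w u)) (a := v)
    omega

lemma DegenOn.lt_card_filter_adj_of_not_insert {S : Finset V} {v : V} (hS : DegenOn G d S)
    (h : ¬ DegenOn G d (insert v S)) : d < (S.filter (fun u => G.Adj v u)).card := by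
  obtain ⟨s, hsS, hv, -⟩ := hS.exists_core_of_not_insert h
  exact hv.trans_le (Finset.card_le_card (Finset.filter_subset_filter _ hsS))

noncomputable def heavyVerts (G : SimpleGraph V) (d : ℕ) (S : Finset V) : Finset V :=
  S.filter (fun w => d ≤ (S.filter (fun u => G.Adj w u)).card)

omit [DecidableEq V] in
lemma card_heavyVerts_le (S : Finset V) : (heavyVerts G d S).card ≤ S.card :=
  Finset.card_le_card (Finset.filter_subset _ _)

lemma DegenOn.lt_card_filter_adj_heavyVerts_of_not_insert {S : Finset V} {v : V}
    (hS : DegenOn G d S) (h : ¬ DegenOn G d (insert v S)) :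
    d < ((heavyVerts G d S).filter (fun u => G.Adj v u)).card := by
  obtain ⟨s, hsS, hv, hcore⟩ := hS.exists_core_of_not_insert h
  have hs : s ⊆ heavyVerts G d S := fun w hw => Finset.mem_filter.mpr
    ⟨hsS hw, (hcore w hw).trans (Finset.card_le_card (Finset.filter_subset_filter _ hsS))⟩
  exact hv.trans_le (Finset.card_le_card (Finset.filter_subset_filter _ hs))

end Degeneracy

lemma Relation.ReflTransGen.exists_nodup_isChain {α : Type*} {r : α → α → Prop} {a b : α}
    (h : Relation.ReflTransGen r a b) :
    ∃ l, List.IsChain r (a :: l) ∧ (a :: l).Nodup ∧ (a :: l).getLast (List.cons_ne_nil a l) = b := by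
  induction h using Relation.ReflTransGen.head_induction_on with
  | refl => exact ⟨[], by simp, by simp, rfl⟩
  | @head a c hac _ ih =>
    obtain ⟨l, hchain, hnodup, hlast⟩ := ih
    by_cases ha : a ∈ c :: l
    · obtain ⟨p, m, hsplit⟩ := List.append_of_mem ha
      rw [hsplit] at hchain hnodup
      refine ⟨m, hchain.right_of_append, hnodup.sublist (List.sublist_append_right p _), ?_⟩
      simp_rw [← hlast, hsplit, List.getLast_append_of_ne_nil _ (List.cons_ne_nil a m)]
    · exact ⟨c :: l, List.isChain_cons_cons.mpr ⟨hac, hchain⟩, List.nodup_cons.mpr ⟨ha, hnodup⟩,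
        by rwa [List.getLast_cons_cons]⟩

section Recolouring

variable {G : SimpleGraph V} {d k : ℕ} {f : V → Fin k}

omit [DecidableEq V] in
@[simp]
lemma mem_cls {v : V} {i : Fin k} : v ∈ cls f i ↔ f v = i := by
  simp [cls]

lemma cls_update (g : V → Fin k) (v : V) (Y C : Fin k) :
    cls (Function.update g v Y) C = if C = Y then insert v (cls g C) else (cls g C).erase v := by
  ext u
  by_cases huv : u = v
  · subst huv
    split_ifs with hC <;> simp [hC, Ne.symm]
  · split_ifs <;> simp [huv]

-- Stated with indicators so that no truncated subtraction occurs.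
lemma card_cls_update_add (g : V → Fin k) {v : V} {Y : Fin k} (hv : g v ≠ Y) (C : Fin k) :
    (cls (Function.update g v Y) C).card + (if C = g v then 1 else 0) =
      (cls g C).card + (if C = Y then 1 else 0) := by
  rw [cls_update]
  by_cases hCY : C = Y
  · subst hCY
    simp [Finset.card_insert_of_notMem, hv, Ne.symm hv]
  · by_cases hCv : C = g v
    · subst hCv
      rw [if_neg hCY, if_neg hCY, if_pos rfl, Finset.card_erase_add_one (by simp), add_zero]
    · simp [hCY, hCv, Finset.erase_eq_of_notMem, Ne.symm hCv]

/-- The path must be simple, as a class can absorb only one new vertex; the last conjunct is the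
invariant that keeps the first class of the path untouched by the later moves. -/
lemma exists_recolouring_of_isChain (hf : IsDegenColoring G d f) (l : List (Fin k)) (H : Fin k)
    (hchain : List.IsChain (MvArc G d f) (H :: l)) (hnodup : (H :: l).Nodup) :
    ∃ g : V → Fin k, IsDegenColoring G d g ∧
      (∀ C, (cls g C).card + (if C = H then 1 else 0) =
        (cls f C).card + (if C = (H :: l).getLast (List.cons_ne_nil H l) then 1 else 0)) ∧
      ∀ u, g u ≠ f u → f u ∈ H :: l ∧ g u ∈ l := by
  induction l generalizing H with
  | nil => exact ⟨f, hf, fun C => rfl, fun u h => absurd rfl h⟩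
  | cons Y t ih =>
    obtain ⟨⟨hHY, v, hvH, -, hmov⟩, hchain'⟩ := List.isChain_cons_cons.mp hchain
    obtain ⟨hHnot, hnodup'⟩ := List.nodup_cons.mp hnodup
    obtain ⟨g, hg, hcard, hmoved⟩ := ih Y hchain' hnodup'
    have hgv : g v = H := by
      by_contra hne
      exact hHnot (hvH ▸ (hmoved v (hvH ▸ hne)).1)
    have hclsY : cls g Y ⊆ cls f Y := fun u hu => by
      rw [mem_cls] at hu ⊢
      by_contra hne
      exact (List.nodup_cons.mp hnodup').1 (hu ▸ (hmoved u (hu ▸ Ne.symm hne)).2)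
    refine ⟨Function.update g v Y, fun C => ?_, fun C => ?_, fun u hu => ?_⟩
    · rw [cls_update]
      split_ifs with hC
      · exact hC ▸ hmov.mono (Finset.insert_subset_insert _ hclsY)
      · exact (hg C).mono (Finset.erase_subset _ _)
    · have hupd := card_cls_update_add g (hgv ▸ hHY) C
      rw [hgv] at hupd
      have := hcard C
      rw [List.getLast_cons_cons]
      omega
    · by_cases huv : u = v
      · subst huv
        simp [hvH]
      · rw [Function.update_of_ne huv] at hu ⊢
        exact ⟨List.mem_cons_of_mem _ (hmoved u hu).1, List.mem_cons_of_mem _ (hmoved u hu).2⟩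

lemma exists_recolouring_of_accTo (hf : IsDegenColoring G d f) {W X : Fin k}
    (h : AccTo G d f W X) :
    ∃ g : V → Fin k, IsDegenColoring G d g ∧
      ∀ C, (cls g C).card + (if C = W then 1 else 0) = (cls f C).card + (if C = X then 1 else 0) := by
  obtain ⟨l, hchain, hnodup, hlast⟩ := h.exists_nodup_isChain
  obtain ⟨g, hg, hcard, -⟩ := exists_recolouring_of_isChain hf l W hchain hnodup
  exact ⟨g, hg, hlast ▸ hcard⟩

end Recolouring

section Equitable

variable {G : SimpleGraph V} {d k : ℕ} {f : V → Fin k}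

omit [DecidableEq V] in
-- All class sizes end up in `[⌊n/k⌋, ⌊n/k⌋ + 1]`.
lemma NearEquitable.isEquitable_of_move {n : ℕ} (hne : NearEquitable n f) {g : V → Fin k}
    {W X : Fin k} (hW : ∀ i, (cls f i).card ≤ (cls f W).card)
    (hX : ∀ i, (cls f X).card ≤ (cls f i).card)
    (hsize : ∀ C, (cls g C).card + (if C = W then 1 else 0) =
      (cls f C).card + (if C = X then 1 else 0)) :
    IsEquitable g := by
  obtain ⟨hbounds, hlow, hhigh, ⟨i₁, hi₁⟩, ⟨i₂, hi₂⟩, ⟨i₃, j₃, hgap⟩, -⟩ := hne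
  set m := n / k
  set M := (n + k - 1) / k
  have hMm : M ≤ m + 1 := by
    calc M ≤ (n + k) / k := Nat.div_le_div_right (by omega)
      _ = m + 1 := Nat.add_div_right n X.pos
  have hWX : W ≠ X := by
    rintro rfl
    have := hX i₃
    have := hW j₃
    omega
  have hge : ∀ i, i ≠ X → m ≤ (cls f i).card := fun i hi => by
    by_contra hlt
    exact hi (Finset.card_le_one.mp hlow i (by simpa using hlt) X
      (by simpa using (hX i).trans_lt (not_le.mp hlt)))
  have hle : ∀ i, i ≠ W → (cls f i).card ≤ M := fun i hi => by
    by_contra hlt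
    exact hi (Finset.card_le_one.mp hhigh i (by simpa using hlt) W
      (by simpa using (not_le.mp hlt).trans_le (hW i)))
  have hrange : ∀ C, m ≤ (cls g C).card ∧ (cls g C).card ≤ m + 1 := fun C => by
    have hC := hsize C
    have := hbounds X
    have := hbounds W
    have := hX i₁
    have := hW i₂
    have := hX i₃
    have := hW j₃
    rcases eq_or_ne C W with rfl | hCW
    · rw [if_pos rfl, if_neg hWX] at hC
      omega
    rcases eq_or_ne C X with rfl | hCX
    · rw [if_neg hCW, if_pos rfl] at hC
      omega
    rw [if_neg hCW, if_neg hCX] at hC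
    have := hge C hCX
    have := hle C hCW
    omega
  intro i j
  have := hrange i
  have := hrange j
  omega

lemma exists_not_accessible (hf : IsDegenColoring G d f) {n : ℕ} (hne : NearEquitable n f)
    (hnoeq : ¬ ∃ g : V → Fin k, IsDegenColoring G d g ∧ IsEquitable g) :
    ∃ Y, ¬ Accessible G d f Y := by
  by_contra! hall
  obtain ⟨i, -⟩ := hne.2.2.2.1
  obtain ⟨W, -, hW⟩ := Finset.exists_max_image Finset.univ (fun C => (cls f C).card)
    ⟨i, Finset.mem_univ i⟩
  obtain ⟨X, hX, hWX⟩ := hall W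
  obtain ⟨g, hg, hsize⟩ := exists_recolouring_of_accTo hf hWX
  exact hnoeq ⟨g, hg, hne.isEquitable_of_move (fun C => hW C (Finset.mem_univ C)) hX hsize⟩

end Equitable

section Counting

variable {G : SimpleGraph V} {d k : ℕ} {f : V → Fin k}

lemma not_movable_of_not_accessible {T : Fin k} (hT : Accessible G d f T) {u : V}
    (hu : ¬ Accessible G d f (f u)) : ¬ Movable G d f u T := fun hmov => by
  obtain ⟨X, hX, hTX⟩ := hT
  exact hu ⟨X, hX, .head ⟨hmov.1, u, rfl, hmov⟩ hTX⟩

lemma card_aset_add_card_bset (G : SimpleGraph V) (d : ℕ) (f : V → Fin k) :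
    (Aset G d f).card + (Bset G d f).card = k := by
  rw [Aset, Bset, Finset.card_filter_add_card_filter_not, Finset.card_univ, Fintype.card_fin]

omit [DecidableEq V] in
lemma card_filter_adj_eq_sum_cls (f : V → Fin k) (w : V) :
    (Finset.univ.filter (fun u => G.Adj w u)).card =
      ∑ C, ((cls f C).filter (fun u => G.Adj w u)).card := by
  rw [Finset.card_eq_sum_card_fiberwise (f := f) (t := Finset.univ) (fun _ _ => by simp)]
  refine Finset.sum_congr rfl fun C _ => congrArg _ ?_
  ext u
  simp [and_comm]

lemma card_filter_adj_bverts_eq_sum_cls (w : V) :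
    ((Bverts G d f).filter (fun u => G.Adj w u)).card =
      ∑ C ∈ Bset G d f, ((cls f C).filter (fun u => G.Adj w u)).card := by
  rw [Finset.card_eq_sum_card_fiberwise (f := f) (t := Bset G d f)
    (fun u hu => by simp_all [Bverts, Bset])]
  refine Finset.sum_congr rfl fun C hC => congrArg _ ?_
  ext u
  simp only [Bset, Finset.mem_filter, Finset.mem_univ, true_and] at hC
  simp only [Bverts, Finset.mem_filter, Finset.mem_univ, true_and, mem_cls]
  constructor
  · exact fun ⟨⟨_, hwu⟩, hu⟩ => ⟨hu, hwu⟩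
  · exact fun ⟨hu, hwu⟩ => ⟨⟨hu ▸ hC, hwu⟩, hu⟩

lemma card_bset_mul_le_card_bverts {T : Fin k} (hT : IsMinClass f T) :
    (Bset G d f).card * ((cls f T).card + 1) ≤ (Bverts G d f).card := by
  rw [Finset.card_eq_sum_card_fiberwise (f := f) (s := Bverts G d f) (t := Bset G d f)
    (fun u hu => by simp_all [Bverts, Bset]), ← smul_eq_mul]
  refine Finset.card_nsmul_le_sum _ _ _ fun C hC => ?_
  simp only [Bset, Finset.mem_filter, Finset.mem_univ, true_and] at hC
  have hlarge : (cls f T).card < (cls f C).card := by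
    by_contra! hle
    exact hC ⟨C, fun j => hle.trans (hT j), .refl⟩
  have hsub : cls f C ⊆ (Bverts G d f).filter (fun u => f u = C) := fun u hu => by
    rw [mem_cls] at hu
    simp [Bverts, hu, hC]
  exact hlarge.trans_le (Finset.card_le_card hsub)

variable {Δ : ℕ} (hdeg : ∀ v : V, (Finset.univ.filter (fun u => G.Adj v u)).card ≤ Δ)
  (hΔk : Δ + 1 ≤ (d + 1) * k) (hf : IsDegenColoring G d f)
include hdeg hΔk hf

/-- A vertex of `T` with `d` neighbours in `T` that cannot move to another accessible class has
`d + 1` neighbours in each of those, which leaves room for at most `(d + 1) b` neighbours in the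
non-accessible classes. -/
lemma card_filter_adj_bverts_le {T : Fin k} (hT : Accessible G d f T)
    (hstuck : ∀ Y, Accessible G d f Y → Y ≠ T → ∀ w, f w = T → ¬ Movable G d f w Y)
    {w : V} (hw : w ∈ heavyVerts G d (cls f T)) :
    ((Bverts G d f).filter (fun u => G.Adj w u)).card ≤ (d + 1) * (Bset G d f).card := by
  obtain ⟨hwT, hwd⟩ := Finset.mem_filter.mp hw
  rw [mem_cls] at hwT
  have hTA : T ∈ Aset G d f := by simp [Aset, hT]
  have hother : ∀ Y ∈ (Aset G d f).erase T, d + 1 ≤ ((cls f Y).filter (fun u => G.Adj w u)).card :=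
    fun Y hY => by
      obtain ⟨hYT, hY⟩ := Finset.mem_erase.mp hY
      refine (hf Y).lt_card_filter_adj_of_not_insert fun hdeg => ?_
      exact hstuck Y (by simpa [Aset] using hY) hYT w hwT ⟨hwT ▸ Ne.symm hYT, hdeg⟩
  have hsplit : (Finset.univ.filter (fun u => G.Adj w u)).card =
      ((cls f T).filter (fun u => G.Adj w u)).card +
        ∑ Y ∈ (Aset G d f).erase T, ((cls f Y).filter (fun u => G.Adj w u)).card +
        ((Bverts G d f).filter (fun u => G.Adj w u)).card := by
    rw [card_filter_adj_eq_sum_cls f, card_filter_adj_bverts_eq_sum_cls,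
      Finset.add_sum_erase _ (fun Y => ((cls f Y).filter (fun u => G.Adj w u)).card) hTA,
      ← Finset.sum_filter_add_sum_filter_not Finset.univ (Accessible G d f)]
    rfl
  have hA := Finset.card_nsmul_le_sum _ _ _ hother
  obtain ⟨a, ha⟩ : ∃ a, (Aset G d f).card = a + 1 :=
    Nat.exists_eq_add_one.mpr (Finset.card_pos.mpr ⟨T, hTA⟩)
  rw [Finset.card_erase_of_mem hTA, ha, Nat.add_sub_cancel, smul_eq_mul] at hA
  have hk := card_aset_add_card_bset G d f
  rw [ha] at hk
  rw [← hk] at hΔk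
  have := hdeg w
  nlinarith

theorem forall_accessible_of_stuck {T : Fin k} (hT : IsMinClass f T)
    (hstuck : ∀ Y, Accessible G d f Y → Y ≠ T → ∀ w, f w = T → ¬ Movable G d f w Y) :
    ∀ Y, Accessible G d f Y := by
  have hTacc : Accessible G d f T := ⟨T, hT, .refl⟩
  have hB : ∀ u ∈ Bverts G d f,
      d + 1 ≤ ((heavyVerts G d (cls f T)).bipartiteAbove G.Adj u).card := fun u hu => by
    have hu : ¬ Accessible G d f (f u) := by simpa [Bverts] using hu
    refine (hf T).lt_card_filter_adj_heavyVerts_of_not_insert fun h => ?_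
    exact not_movable_of_not_accessible hTacc hu ⟨fun hfu => hu (hfu ▸ hTacc), h⟩
  have hU : ∀ w ∈ heavyVerts G d (cls f T),
      ((Bverts G d f).bipartiteBelow G.Adj w).card ≤ (d + 1) * (Bset G d f).card := fun w hw => by
    simpa only [Finset.bipartiteBelow, G.adj_comm] using
      card_filter_adj_bverts_le hdeg hΔk hf hTacc hstuck hw
  have hcount := Finset.card_mul_le_card_mul G.Adj hB hU
  have hsize : (Bset G d f).card * ((cls f T).card + 1) ≤ (Bverts G d f).card :=
    card_bset_mul_le_card_bverts hT
  have hUT := card_heavyVerts_le (G := G) (d := d) (cls f T)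
  have hb : (Bset G d f).card = 0 := by
    nlinarith [Nat.mul_le_mul_right (d + 1) hsize,
      Nat.mul_le_mul_right ((d + 1) * (Bset G d f).card) hUT]
  intro Y
  by_contra hY
  exact (Finset.card_pos.mpr ⟨Y, by simp [Bset, hY]⟩).ne' hb

end Counting

section Decomposition

variable {G : SimpleGraph V} {d k : ℕ} {f : V → Fin k} {q : ℕ} {𝒟 : Fin q → Finset (Fin k)}
  {trm : Fin q → Fin k}

lemma IsDecomp.trm_mem (hdec : IsDecomp G d f 𝒟 trm) (i : Fin q) : trm i ∈ 𝒟 i :=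
  ((hdec.1 i).2.2.2 _).mpr ⟨⟨_, (hdec.1 i).1, .refl⟩, (hdec.1 i).2.1, .refl⟩

lemma IsDecomp.not_mem_of_lt (hdec : IsDecomp G d f 𝒟 trm) {i j : Fin q} (hij : i < j)
    {u : Fin k} (hu : u ∈ 𝒟 i) : u ∉ 𝒟 j := fun huj =>
  (((hdec.1 j).2.2.2 u).mp huj).2.1 (Finset.mem_biUnion.mpr ⟨i, by simpa using hij, hu⟩)

-- Otherwise `u` would have been absorbed into the earlier part `D_j`.
lemma IsDecomp.le_of_accTo (hdec : IsDecomp G d f 𝒟 trm) {i j : Fin q} {u Y : Fin k}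
    (hu : u ∈ 𝒟 i) (hY : Y ∈ 𝒟 j) (huY : AccTo G d f u Y) : i ≤ j := by
  by_contra! hji
  have hunused : u ∉ UsedBefore 𝒟 j := by
    simp only [UsedBefore, Finset.mem_biUnion, Finset.mem_filter, Finset.mem_univ, true_and]
    rintro ⟨i', hi'j, hu'⟩
    exact hdec.not_mem_of_lt (hi'j.trans hji) hu' hu
  have hYj := ((hdec.1 j).2.2.2 Y).mp hY
  have hu_acc := (((hdec.1 i).2.2.2 u).mp hu).1
  exact hdec.not_mem_of_lt hji (((hdec.1 j).2.2.2 u).mpr ⟨hu_acc, hunused, huY.trans hYj.2.2⟩) hu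

end Decomposition

/-- **Lemma 2.3.**  Let `Δ, d, k` be positive integers with `(d+1)k ≥ Δ + 1`, and let `G`
be a graph with maximum degree at most `Δ`.  Suppose that `G` has no equitable
`d`-degenerate `k`-colouring, but has a near-equitable `d`-degenerate `k`-colouring `f`.
Then the last subdigraph `D_-` of the decomposition of the accessible classes of `f`
contains at least two colour classes. -/
theorem Dminus_card_ge_two (Δ d k : ℕ)
    (hΔk : Δ + 1 ≤ (d + 1) * k)
    (G : SimpleGraph V)
    (hdeg : ∀ v : V, (Finset.univ.filter (fun u => G.Adj v u)).card ≤ Δ)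
    (hnoeq : ¬ ∃ g : V → Fin k, IsDegenColoring G d g ∧ IsEquitable g)
    (f : V → Fin k) (hf : IsDegenColoring G d f)
    (hne : NearEquitable (Fintype.card V) f)
    (q : ℕ) (hq : 0 < q) (𝒟 : Fin q → Finset (Fin k)) (trm : Fin q → Fin k)
    (hdec : IsDecomp G d f 𝒟 trm) :
    2 ≤ (𝒟 ⟨q - 1, by omega⟩).card := by
  set ℓ : Fin q := ⟨q - 1, by omega⟩
  by_contra! hsmall
  have hℓ : 𝒟 ℓ = {trm ℓ} := Finset.eq_singleton_iff_unique_mem.mpr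
    ⟨hdec.trm_mem ℓ, fun Y hY => Finset.card_le_one.mp (by omega) Y hY _ (hdec.trm_mem ℓ)⟩
  have hstuck : ∀ Y, Accessible G d f Y → Y ≠ trm ℓ → ∀ w, f w = trm ℓ → ¬ Movable G d f w Y := by
    intro Y hY hYT w hw hmov
    obtain ⟨j, hYj⟩ := hdec.2.2 Y hY
    have hℓj := hdec.le_of_accTo (hdec.trm_mem ℓ) hYj (.single ⟨Ne.symm hYT, w, hw, hmov⟩)
    have hjℓ : j = ℓ := le_antisymm (Fin.le_iff_val_le_val.mpr (Nat.le_sub_one_of_lt j.isLt)) hℓj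
    rw [hjℓ, hℓ, Finset.mem_singleton] at hYj
    exact hYT hYj
  obtain ⟨Y, hY⟩ := exists_not_accessible hf hne hnoeq
  exact hY (forall_accessible_of_stuck hdeg hΔk hf (hdec.1 ℓ).1 hstuck Y)
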